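/- arXiv:1404.4315 — 2 statements merged into one kernel-verified Lean document; each statement's English description precedes it below -/
import Mathlib

section
/- Let G be a finite group of order n and let J be the augmentation ideal of the group ring (ℤ/nℤ)[G], i.e. the kernel of the augmentation map (ℤ/nℤ)[G] → ℤ/nℤ. Then H¹(G, J) is isomorphic to ℤ/nℤ. -/
/-!
The augmentation sequence `0 → J → k[G] → k → 0` gives an exact sequence
`H⁰(G, k[G]) → H⁰(G, k) → H¹(G, J) → H¹(G, k[G])`. For finite `G` the regular module `k[G]` is
coinduced from the trivial subgroup, so `H¹(G, k[G]) = 0` by Shapiro's lemma. The invariants of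
`k[G]` are the multiples of `∑ g`, whose augmentation is `|G|`; when `|G| = 0` in `k` the first map
vanishes and the connecting map `k = H⁰(G, k) → H¹(G, J)` is an isomorphism.
-/

open CategoryTheory Finsupp

/-- The augmentation map `k[G] → k` as a morphism of representations
from the left regular representation to the trivial representation. -/
noncomputable def augmentationHom (k : Type) (G : Type) [CommRing k] [Group G] :
    Rep.leftRegular k G ⟶ Rep.trivial k G k :=
  Rep.ofHom
  { toLinearMap := Finsupp.linearCombination k (fun _ : G => (1 : k)) ∘ₗ
      (MonoidAlgebra.coeffLinearEquiv k).toLinearMap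
    isIntertwining' := fun g => by
      ext x
      simp [Representation.ofMulAction_def] }

/-- The augmentation ideal `I_G`, i.e. the kernel of the augmentation map `k[G] → k`,
as a `G`-representation via left multiplication. -/
noncomputable def augmentationIdeal (k : Type) (G : Type) [CommRing k] [Group G] : Rep k G :=
  Limits.kernel (augmentationHom k G)

section

variable (k G : Type) [CommRing k] [Group G]

/-- `x ↦ (h ↦ x.coeff h⁻¹)` turns left translation on `k[G]` into the right translation action
of the coinduced module on `G → k`. -/
noncomputable def Rep.leftRegularIsoCoindBot [Finite G] :
    leftRegular k G ≅ coind (⊥ : Subgroup G).subtype (trivial k (⊥ : Subgroup G) k) :=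
  Rep.mkIso <| .mk ((MonoidAlgebra.coeffLinearEquiv k).trans <|
      (Finsupp.linearEquivFunOnFinite k k G).trans <|
      (LinearEquiv.funCongrLeft k k (Equiv.inv G)).trans
        (LinearEquiv.ofTop (Representation.coindV (⊥ : Subgroup G).subtype
          (trivial k (⊥ : Subgroup G) k).ρ) (by ext; simp)).symm) fun g => by
    refine LinearMap.ext fun x => Subtype.ext <| funext fun h => ?_
    change (Representation.ofMulAction k G G g x).coeff h⁻¹ = x.coeff (h * g)⁻¹
    rw [Representation.coeff_ofMulAction, mul_inv_rev, smul_eq_mul]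

theorem isZero_groupCohomology_succ_leftRegular [Finite G] (n : ℕ) :
    Limits.IsZero (groupCohomology (Rep.leftRegular k G) (n + 1)) :=
  (isZero_groupCohomology_succ_of_subsingleton _ n).of_iso <|
    (groupCohomology.functor k G (n + 1)).mapIso (Rep.leftRegularIsoCoindBot k G) ≪≫
      groupCohomology.coindIso _ (n + 1)

section Invariants

variable {k G}

theorem augmentationHom_hom_apply [Fintype G] (x : MonoidAlgebra k G) :
    (augmentationHom k G).hom x = ∑ g, x.coeff g := by
  simp [augmentationHom, Finsupp.linearCombination_apply, Finsupp.sum_fintype]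

theorem coeff_eq_coeff_one_of_mem_leftRegular_invariants {x : MonoidAlgebra k G}
    (hx : x ∈ (Rep.leftRegular k G).ρ.invariants) (g : G) : x.coeff g = x.coeff 1 := by
  simpa using (congrArg (MonoidAlgebra.coeff · g) (hx g)).symm

theorem augmentationHom_hom_apply_of_mem_invariants [Fintype G] {x : MonoidAlgebra k G}
    (hx : x ∈ (Rep.leftRegular k G).ρ.invariants) :
    (augmentationHom k G).hom x = Fintype.card G • x.coeff 1 := by
  rw [augmentationHom_hom_apply]
  simp [coeff_eq_coeff_one_of_mem_leftRegular_invariants hx]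

end Invariants

theorem H0_map_augmentationHom_eq_zero [Finite G] (hG : (Nat.card G : k) = 0) :
    groupCohomology.map (MonoidHom.id G) (A := Rep.leftRegular k G) (augmentationHom k G) 0 =
      0 := by
  have : Fintype G := Fintype.ofFinite G
  have hinv : (Rep.invariantsFunctor k G).map (augmentationHom k G) = 0 := by
    ext ⟨x, hx⟩
    refine Subtype.ext ((augmentationHom_hom_apply_of_mem_invariants hx).trans ?_)
    simp [← Nat.card_eq_fintype_card, hG]
  rw [← cancel_mono (groupCohomology.H0Iso (Rep.trivial k G k)).hom,
    groupCohomology.map_id_comp_H0Iso_hom, hinv, Limits.comp_zero, Limits.zero_comp]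

noncomputable abbrev augmentationShortComplex : ShortComplex (Rep k G) :=
  ShortComplex.mk (Limits.kernel.ι (augmentationHom k G)) (augmentationHom k G)
    (Limits.kernel.condition _)

theorem augmentationShortComplex_shortExact : (augmentationShortComplex k G).ShortExact :=
  have : Epi (augmentationHom k G) :=
    (Rep.epi_iff_surjective _).2 fun r => ⟨MonoidAlgebra.single 1 r, by simp [augmentationHom]⟩
  .mk' (ShortComplex.exact_of_f_is_kernel _ (Limits.kernelIsKernel _)) inferInstance this

theorem isIso_δ_augmentationShortComplex [Finite G] (hG : (Nat.card G : k) = 0) :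
    IsIso (groupCohomology.δ (augmentationShortComplex_shortExact k G) 0 1 rfl) := by
  have hX := augmentationShortComplex_shortExact k G
  have : Epi (groupCohomology.δ hX 0 1 rfl) :=
    groupCohomology.epi_δ_of_isZero hX 0 (isZero_groupCohomology_succ_leftRegular k G 0)
  have : Mono (groupCohomology.δ hX 0 1 rfl) :=
    (groupCohomology.mapShortComplex₃_exact hX rfl).mono_g (H0_map_augmentationHom_eq_zero k G hG)
  exact isIso_of_mono_of_epi _

noncomputable def H1AugmentationIdealIso [Finite G] (hG : (Nat.card G : k) = 0) :
    groupCohomology (augmentationIdeal k G) 1 ≅ ModuleCat.of k k :=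
  have := isIso_δ_augmentationShortComplex k G hG
  (asIso (groupCohomology.δ (augmentationShortComplex_shortExact k G) 0 1 rfl)).symm ≪≫
    groupCohomology.H0IsoOfIsTrivial _

end

/-- For a finite group `G` of order `n`, the first group cohomology of the augmentation
ideal `J ⊆ (ℤ/nℤ)[G]` satisfies `H¹(G, J) ≃ ℤ/nℤ`. -/
theorem h1_augmentationIdeal_zmod_iso_zmod_card (G : Type) [Group G] [Finite G]
    (n : ℕ) (hn : n = Nat.card G) :
    Nonempty ((groupCohomology (augmentationIdeal (ZMod n) G) 1) ≃+ ZMod n) := by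
  subst hn
  exact ⟨(H1AugmentationIdealIso (ZMod _) G (ZMod.natCast_self _)).toLinearEquiv.toAddEquiv⟩
end

section
/- Let K = ℂ(x)((t)) be the field of formal Laurent series in t over the rational function field ℂ(x). Then there are no elements X₁, Y₁, X₂, Y₂, X₃, Y₃ ∈ K with (X₁² − x·Y₁²)·(X₂² − (1+x)·Y₂²)·(X₃² − x(1+x)·Y₃²) = t. -/
/-!
For `a ∈ ℂ(x)` not a square, the lowest-order terms of `X²` and `aY²` in `ℂ(x)((t))` cannot
cancel: either their orders differ, or they agree and the leading coefficients would give
`a = (x₀ / y₀)²`. Hence `X² − aY²` has even `t`-adic order. The constants `x`, `1 + x` and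
`x(1 + x)` each have a simple root, so they are not squares in `ℂ[x]`, nor, `ℂ[x]` being
integrally closed, in `ℂ(x)`. The product of the three norms therefore has even order,
while `t` has order `1`.
-/

open Polynomial

theorem IsIntegrallyClosed.isSquare_algebraMap_iff {R K : Type*} [CommRing R] [CommRing K]
    [Algebra R K] [IsFractionRing R K] [IsIntegrallyClosed R] {r : R} :
    IsSquare (algebraMap R K r) ↔ IsSquare r := by
  refine ⟨fun ⟨f, hf⟩ ↦ ?_, fun h ↦ h.map (algebraMap R K)⟩
  have hint : IsIntegral R f :=
    .of_pow two_pos (by rw [sq, ← hf]; exact isIntegral_algebraMap)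
  obtain ⟨s, rfl⟩ := IsIntegrallyClosed.isIntegral_iff.mp hint
  exact ⟨s, IsFractionRing.injective R K (by rw [hf, map_mul])⟩

theorem Polynomial.not_isSquare_of_odd_rootMultiplicity {R : Type*} [CommRing R] [IsDomain R]
    {p : R[X]} {c : R} (h : Odd (p.rootMultiplicity c)) : ¬ IsSquare p := by
  rintro ⟨q, rfl⟩
  have hq : q * q ≠ 0 := by
    rintro hq
    simp [hq] at h
  rw [rootMultiplicity_mul hq, ← two_mul] at h
  exact Nat.not_even_iff_odd.mpr h (even_two_mul _)

theorem RatFunc.not_isSquare_of_odd_rootMultiplicity {K : Type*} [Field K] {p : K[X]} {c : K}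
    (h : Odd (p.rootMultiplicity c)) : ¬ IsSquare (algebraMap K[X] (RatFunc K) p) := by
  rw [IsIntegrallyClosed.isSquare_algebraMap_iff]
  exact Polynomial.not_isSquare_of_odd_rootMultiplicity h

theorem WithTop.even_coe {α : Type*} [Add α] {a : α} : Even (a : WithTop α) ↔ Even a := by
  refine ⟨fun ⟨r, hr⟩ ↦ ?_, fun ⟨r, hr⟩ ↦ ⟨r, by rw [hr, WithTop.coe_add]⟩⟩
  induction r using WithTop.recTopCoe with
  | top => simp at hr
  | coe r => exact ⟨r, WithTop.coe_injective (by rw [hr, WithTop.coe_add])⟩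

namespace HahnSeries

variable {Γ R : Type*} [LinearOrder Γ]

theorem orderTop_sub_eq_min [AddGroup R] {x y : HahnSeries Γ R}
    (h : x.orderTop = y.orderTop → x.leadingCoeff ≠ y.leadingCoeff) :
    (x - y).orderTop = min x.orderTop y.orderTop := by
  rcases lt_trichotomy x.orderTop y.orderTop with hlt | heq | hgt
  · rw [orderTop_sub hlt, min_eq_left hlt.le]
  · have hx : x.orderTop ≠ ⊤ := by
      intro hx
      have hy : y.orderTop = ⊤ := heq ▸ hx
      rw [orderTop_eq_top] at hx hy
      exact h heq (by rw [hx, hy])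
    have hy : y.orderTop ≠ ⊤ := heq ▸ hx
    refine le_antisymm ?_ min_orderTop_le_orderTop_sub
    rw [← heq, min_self, ← WithTop.coe_untop _ hx]
    refine orderTop_le_of_coeff_ne_zero ?_
    have hxy : y.orderTop.untop hy = x.orderTop.untop hx := by simp [heq]
    rw [coeff_sub, coeff_untop_eq_leadingCoeff, ← hxy, coeff_untop_eq_leadingCoeff]
    exact sub_ne_zero.mpr (h heq)
  · rw [sub_eq_add_neg, orderTop_add_eq_right (y := -y) (by rwa [orderTop_neg]), orderTop_neg,
      min_eq_right hgt.le]

theorem even_orderTop_sq_sub_C_mul_sq [AddCommMonoid Γ] [IsOrderedCancelAddMonoid Γ] [Field R]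
    {a : R} (ha : ¬ IsSquare a) (x y : HahnSeries Γ R) :
    Even (x ^ 2 - C a * y ^ 2).orderTop := by
  rcases eq_or_ne y 0 with rfl | hy
  · simp only [sq, mul_zero, sub_zero, orderTop_mul]
    exact Even.add_self _
  have ha0 : a ≠ 0 := by
    rintro rfl
    exact ha IsSquare.zero
  rw [orderTop_sub_eq_min]
  · simp only [sq, orderTop_mul, C_apply, orderTop_single ha0, WithTop.coe_zero, zero_add]
    rcases min_choice (x.orderTop + x.orderTop) (y.orderTop + y.orderTop) with h | h <;>
      rw [h] <;> exact Even.add_self _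
  · intro _ h
    simp only [sq, leadingCoeff_mul, C_apply, leadingCoeff_of_single] at h
    have hy' : y.leadingCoeff ≠ 0 := leadingCoeff_ne_zero.mpr hy
    exact ha ⟨x.leadingCoeff / y.leadingCoeff, by field_simp; linear_combination h.symm⟩

end HahnSeries

namespace RatFunc

variable {K : Type*} [Field K]

theorem not_isSquare_X : ¬ IsSquare (X : RatFunc K) := by
  have h : (Polynomial.X : K[X]).rootMultiplicity 0 = 1 := by
    simpa using rootMultiplicity_X_sub_C_self (x := (0 : K))
  rw [← algebraMap_X]
  exact not_isSquare_of_odd_rootMultiplicity (h ▸ odd_one)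

theorem not_isSquare_one_add_X : ¬ IsSquare (1 + X : RatFunc K) := by
  have h : (1 + Polynomial.X : K[X]).rootMultiplicity (-1) = 1 := by
    simpa [add_comm] using rootMultiplicity_X_sub_C_self (x := (-1 : K))
  rw [← algebraMap_X, ← map_one (algebraMap K[X] _), ← map_add]
  exact not_isSquare_of_odd_rootMultiplicity (h ▸ odd_one)

theorem not_isSquare_X_mul_one_add_X : ¬ IsSquare (X * (1 + X) : RatFunc K) := by
  have h1X : (1 + Polynomial.X : K[X]) ≠ 0 := fun h ↦ by
    simpa using congrArg (Polynomial.eval 0) h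
  have h : (Polynomial.X * (1 + Polynomial.X) : K[X]).rootMultiplicity 0 = 1 := by
    rw [rootMultiplicity_mul (mul_ne_zero Polynomial.X_ne_zero h1X),
      rootMultiplicity_eq_zero (p := 1 + _) (by simp)]
    simpa using rootMultiplicity_X_sub_C_self (x := (0 : K))
  rw [← algebraMap_X, ← map_one (algebraMap K[X] _), ← map_add, ← map_mul]
  exact not_isSquare_of_odd_rootMultiplicity (h ▸ odd_one)

end RatFunc

/-- In `K = ℂ(x)((t))`, the product `(X₁² − xY₁²)(X₂² − (1+x)Y₂²)(X₃² − x(1+x)Y₃²)`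
never takes the value `t`. -/
theorem no_product_of_norms_eq_t :
    ¬ ∃ X₁ Y₁ X₂ Y₂ X₃ Y₃ : LaurentSeries (RatFunc ℂ),
      (X₁ ^ 2 - HahnSeries.C (RatFunc.X : RatFunc ℂ) * Y₁ ^ 2) *
      (X₂ ^ 2 - HahnSeries.C (1 + (RatFunc.X : RatFunc ℂ)) * Y₂ ^ 2) *
      (X₃ ^ 2 - HahnSeries.C ((RatFunc.X : RatFunc ℂ) * (1 + RatFunc.X)) * Y₃ ^ 2)
        = HahnSeries.single (1 : ℤ) (1 : RatFunc ℂ) := by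
  rintro ⟨X₁, Y₁, X₂, Y₂, X₃, Y₃, h⟩
  have hval := congrArg HahnSeries.orderTop h
  rw [HahnSeries.orderTop_mul, HahnSeries.orderTop_mul,
    HahnSeries.orderTop_single one_ne_zero] at hval
  refine Int.not_even_one (WithTop.even_coe.mp (hval ▸ ((Even.add ?_ ?_).add ?_)))
  · exact HahnSeries.even_orderTop_sq_sub_C_mul_sq RatFunc.not_isSquare_X X₁ Y₁
  · exact HahnSeries.even_orderTop_sq_sub_C_mul_sq RatFunc.not_isSquare_one_add_X X₂ Y₂
  · exact HahnSeries.even_orderTop_sq_sub_C_mul_sq RatFunc.not_isSquare_X_mul_one_add_X X₃ Y₃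
end
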